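/- arXiv:2110.01216 — 7 statements merged into one kernel-verified Lean document; each statement's English description precedes it below -/
import Mathlib

section
/- Let n be a natural number, G a square n×n matrix with entries in RatFunc ℂ, and let E, F be invertible n×n matrices over ℂ, regarded as matrices of constant rational functions via the entrywise embedding ℂ → RatFunc ℂ. Define G₂ := F⁻¹ · G · E⁻¹ (a matrix over RatFunc ℂ). Then for every a ∈ ℂ, a is a pole of G₂ if and only if a is a pole of G. -/
open Matrix

/-- `a` is a pole of a matrix of rational functions if some entry, written in
lowest terms, has denominator vanishing at `a`. -/
def Matrix.IsPoleAt {n : ℕ} (G : Matrix (Fin n) (Fin n) (RatFunc ℂ)) (a : ℂ) : Prop :=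
  ∃ i j, ((G i j).denom).eval a = 0

/-!
The rational functions whose denominator does not vanish at `a` form a subring of `RatFunc ℂ`,
so the matrices with entries in it form a subring containing every constant matrix. Since
`G₂ = F⁻¹ G E⁻¹` and `G = F G₂ E` with constant outer factors, `G₂` is regular at `a` exactly
when `G` is.
-/

namespace RatFunc

variable {K : Type*} [Field K]

theorem eval_denom_ne_zero_of_dvd {a : K} {f g h : RatFunc K} (hd : f.denom ∣ g.denom * h.denom)
    (hg : g.denom.eval a ≠ 0) (hh : h.denom.eval a ≠ 0) : f.denom.eval a ≠ 0 := by
  obtain ⟨c, hc⟩ := hd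
  intro hf
  apply mul_ne_zero hg hh
  simpa [hf] using congrArg (Polynomial.eval a) hc

def regularAt (a : K) : Subring (RatFunc K) where
  carrier := {f | f.denom.eval a ≠ 0}
  zero_mem' := by simp
  one_mem' := by simp
  add_mem' hf hg := eval_denom_ne_zero_of_dvd (denom_add_dvd _ _) hf hg
  mul_mem' hf hg := eval_denom_ne_zero_of_dvd (denom_mul_dvd _ _) hf hg
  neg_mem' {f} hf := by
    rw [neg_eq_neg_one_mul, ← map_one C, ← map_neg C]
    exact eval_denom_ne_zero_of_dvd (denom_mul_dvd _ _) (by rw [denom_C]; simp) hf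

theorem C_mem_regularAt (a c : K) : C c ∈ regularAt a := by
  simp [regularAt]

end RatFunc

theorem Matrix.inv_map_of_field {K L : Type*} [Field K] [Field L] {n : Type*} [Fintype n]
    [DecidableEq n] (f : K →+* L) (A : Matrix n n K) : (A.map f)⁻¹ = A⁻¹.map f := by
  have hdet : (A.map f).det = f A.det := (f.map_det A).symm
  have hadj : (A.map f).adjugate = A.adjugate.map f := (f.map_adjugate A).symm
  rw [inv_def, inv_def, hdet, hadj, Ring.inverse_eq_inv', Ring.inverse_eq_inv', ← map_inv₀,
    Matrix.map_smul' _ _ _ (map_mul f)]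

theorem Matrix.not_isPoleAt_iff {n : ℕ} (G : Matrix (Fin n) (Fin n) (RatFunc ℂ)) (a : ℂ) :
    ¬ G.IsPoleAt a ↔ G ∈ (RatFunc.regularAt a).matrix := by
  simp only [IsPoleAt, not_exists]
  rfl

theorem Matrix.map_C_mem_regularAt_matrix {n : ℕ} (A : Matrix (Fin n) (Fin n) ℂ) (a : ℂ) :
    A.map RatFunc.C ∈ (RatFunc.regularAt a).matrix :=
  fun i j => RatFunc.C_mem_regularAt a (A i j)

theorem stmt_1 {n : ℕ} (G : Matrix (Fin n) (Fin n) (RatFunc ℂ))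
    (E F : Matrix (Fin n) (Fin n) ℂ) (hE : IsUnit E) (hF : IsUnit F) :
    ∀ a : ℂ,
      ((F.map (RatFunc.C : ℂ →+* RatFunc ℂ))⁻¹ * G *
        (E.map (RatFunc.C : ℂ →+* RatFunc ℂ))⁻¹).IsPoleAt a ↔ G.IsPoleAt a := by
  intro a
  set C : ℂ →+* RatFunc ℂ := RatFunc.C
  have hFC : IsUnit (F.map C).det := (isUnit_iff_isUnit_det _).mp (hF.map C.mapMatrix)
  have hEC : IsUnit (E.map C).det := (isUnit_iff_isUnit_det _).mp (hE.map C.mapMatrix)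
  have hG : G = F.map C * ((F.map C)⁻¹ * G * (E.map C)⁻¹) * E.map C := by
    rw [← mul_assoc, mul_nonsing_inv_cancel_left _ _ hFC, nonsing_inv_mul_cancel_right _ _ hEC]
  rw [← not_iff_not, not_isPoleAt_iff, not_isPoleAt_iff]
  constructor
  · intro h
    rw [hG]
    exact mul_mem (mul_mem (map_C_mem_regularAt_matrix F a) h) (map_C_mem_regularAt_matrix E a)
  · intro h
    rw [inv_map_of_field, inv_map_of_field]
    exact mul_mem (mul_mem (map_C_mem_regularAt_matrix _ a) h) (map_C_mem_regularAt_matrix _ a)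
end

section
/- Let k_pf > 0, k_qv > 0 and τ > 0 be real numbers. For a nonzero real Ω, define the 2×2 complex matrix N(Ω) = [[(1 + iΩτ)/(iΩ·k_pf), 0], [0, 1/k_qv]]. Then (i) for every real Ω ≠ 0, N(Ω) + N(Ω)^H = [[2τ/k_pf, 0], [0, 2/k_qv]], and this matrix is positive semidefinite; and (ii) the residue at the pole s = 0, namely the limit as s → 0 (s ∈ ℂ, s ≠ 0) of s·[[(1 + sτ)/(s·k_pf), 0], [0, 1/k_qv]], equals [[1/k_pf, 0], [0, 0]], which is a positive semidefinite Hermitian matrix. -/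
/-!
On the imaginary axis the droop entry splits as `τ / k_pf - i / (Ω k_pf)`: the integrator
contributes only a skew-Hermitian part, so the Hermitian part is the constant `τ / k_pf`, and
multiplying by `s` cancels the pole, leaving the residue `1 / k_pf`. All matrices involved are
diagonal, so positive semidefiniteness reduces to nonnegativity of the diagonal entries.
-/

open Matrix Filter Topology ComplexOrder

theorem Matrix.posSemidef_vec2 {R : Type*} [CommRing R] [PartialOrder R] [StarRing R]
    [StarOrderedRing R] {a b : R} (ha : 0 ≤ a) (hb : 0 ≤ b) :
    (!![a, 0; 0, b] : Matrix (Fin 2) (Fin 2) R).PosSemidef := by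
  rw [← diagonal_vec2]
  exact .diagonal (by simp [Pi.le_def, Fin.forall_fin_two, ha, hb])

theorem Matrix.vec2_add_conjTranspose {α : Type*} [AddMonoid α] [StarAddMonoid α] (a b : α) :
    !![a, 0; 0, b] + !![a, 0; 0, b]ᴴ = !![a + star a, 0; 0, b + star b] := by
  simp only [← diagonal_vec2, diagonal_conjTranspose, diagonal_add]
  congr 1
  ext i
  fin_cases i <;> rfl

theorem Complex.one_add_I_mul_div_I_mul {Ω τ k : ℝ} (hΩ : Ω ≠ 0) (hk : k ≠ 0) :
    (1 + I * Ω * τ) / (I * Ω * k) = τ / k - I / (Ω * k) := by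
  field_simp
  ring_nf
  simp only [I_sq]
  ring

theorem Complex.one_add_I_mul_div_I_mul_add_star {Ω τ k : ℝ} (hΩ : Ω ≠ 0) (hk : k ≠ 0) :
    (1 + I * Ω * τ) / (I * Ω * k) + star ((1 + I * Ω * τ) / (I * Ω * k)) = 2 * τ / k := by
  rw [one_add_I_mul_div_I_mul hΩ hk]
  simp only [star_sub, star_div₀, RCLike.star_def, conj_ofReal, conj_I, star_mul']
  ring

theorem tendsto_smul_vec2_one_add_mul_div_mul (τ k q : ℝ) :
    Tendsto (fun s : ℂ => s • (!![(1 + s * τ) / (s * k), 0; 0, 1 / (q : ℂ)] :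
      Matrix (Fin 2) (Fin 2) ℂ)) (𝓝[≠] 0) (𝓝 !![(1 / k : ℂ), 0; 0, 0]) := by
  have hcancel : ∀ s : ℂ, s ≠ 0 →
      (!![(1 + s * τ) / k, 0; 0, s / q] : Matrix (Fin 2) (Fin 2) ℂ) =
        s • !![(1 + s * τ) / (s * k), 0; 0, 1 / (q : ℂ)] := fun s hs => by
    simp only [smul_of, smul_cons, smul_eq_mul, smul_empty, ← mul_div_assoc,
      mul_div_mul_left _ _ hs, mul_zero, mul_one]
  have hcont : Continuous fun s : ℂ =>
      (!![(1 + s * τ) / k, 0; 0, s / q] : Matrix (Fin 2) (Fin 2) ℂ) := by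
    fun_prop
  refine (tendsto_nhdsWithin_of_tendsto_nhds ?_).congr' (eventually_nhdsWithin_of_forall hcancel)
  simpa using hcont.tendsto 0

theorem stmt_3 (kpf kqv τ : ℝ) (hkpf : 0 < kpf) (hkqv : 0 < kqv) (hτ : 0 < τ) :
    (∀ Ω : ℝ, Ω ≠ 0 →
      (!![(1 + Complex.I * Ω * τ) / (Complex.I * Ω * kpf), 0; 0, 1 / (kqv : ℂ)] +
        (!![(1 + Complex.I * Ω * τ) / (Complex.I * Ω * kpf), 0; 0, 1 / (kqv : ℂ)])ᴴ
          = !![(2 * τ / kpf : ℂ), 0; 0, (2 / kqv : ℂ)]) ∧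
      (!![(2 * τ / kpf : ℂ), 0; 0, (2 / kqv : ℂ)] : Matrix (Fin 2) (Fin 2) ℂ).PosSemidef) ∧
    Tendsto
      (fun s : ℂ => s • (!![(1 + s * τ) / (s * kpf), 0; 0, 1 / (kqv : ℂ)] :
        Matrix (Fin 2) (Fin 2) ℂ))
      (𝓝[≠] 0) (𝓝 !![(1 / kpf : ℂ), 0; 0, 0]) ∧
    (!![(1 / kpf : ℂ), 0; 0, 0] : Matrix (Fin 2) (Fin 2) ℂ).PosSemidef ∧
    (!![(1 / kpf : ℂ), 0; 0, 0] : Matrix (Fin 2) (Fin 2) ℂ).IsHermitian := by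
  have hresidue : (!![(1 / kpf : ℂ), 0; 0, 0] : Matrix (Fin 2) (Fin 2) ℂ).PosSemidef :=
    posSemidef_vec2 (by positivity) le_rfl
  refine ⟨fun Ω hΩ => ⟨?_, posSemidef_vec2 (by positivity) (by positivity)⟩,
    tendsto_smul_vec2_one_add_mul_div_mul τ kpf kqv, hresidue, hresidue.isHermitian⟩
  have hqv : (1 / kqv : ℂ) + star (1 / kqv : ℂ) = 2 / kqv := by
    rw [star_div₀, star_one, Complex.star_def, Complex.conj_ofReal]
    ring
  rw [vec2_add_conjTranspose, Complex.one_add_I_mul_div_I_mul_add_star hΩ hkpf.ne', hqv]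
end

section
/- Let M > 0, D > 0 and c be real numbers with c < M/D². Then there exists Ω₀ > 0 such that for every real Ω with 0 < Ω < Ω₀ and for every complex number β and every real number γ, the 2×2 Hermitian matrix H(Ω) = [[2·(Re(1/(−M·Ω² + i·D·Ω)) + c), β], [conj(β), γ]] is not positive semidefinite. -/
open Matrix ComplexOrder

/-!
For `Ω ≠ 0` one has `Re (1 / (-M Ω² + i D Ω)) = -M / (M² Ω² + D²)`, a continuous function of `Ω`
whose value at `Ω = 0` is `-M / D²`. Since `c < M / D²`, the `(0, 0)` entry of `H(Ω)` is therefore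
negative for all small `Ω > 0`, and a positive semidefinite matrix has nonnegative diagonal.
-/

lemma Complex.re_one_div_neg_mul_sq_add_I_mul (M D : ℝ) {Ω : ℝ} (hΩ : Ω ≠ 0) :
    (1 / (-(M : ℂ) * Ω ^ 2 + Complex.I * D * Ω)).re = -M / (M ^ 2 * Ω ^ 2 + D ^ 2) := by
  have hre : (-(M : ℂ) * Ω ^ 2 + Complex.I * D * Ω).re = -(M * Ω ^ 2) := by
    simp [pow_two]
  have him : (-(M : ℂ) * Ω ^ 2 + Complex.I * D * Ω).im = D * Ω := by
    simp [pow_two]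
  rw [one_div, Complex.inv_re, Complex.normSq_apply, hre, him]
  calc -(M * Ω ^ 2) / (-(M * Ω ^ 2) * -(M * Ω ^ 2) + D * Ω * (D * Ω))
      = Ω ^ 2 * -M / (Ω ^ 2 * (M ^ 2 * Ω ^ 2 + D ^ 2)) := by ring_nf
    _ = -M / (M ^ 2 * Ω ^ 2 + D ^ 2) := mul_div_mul_left _ _ (pow_ne_zero 2 hΩ)

lemma exists_pos_forall_neg_div_add_neg {M D c : ℝ} (hD : D ≠ 0) (hc : c < M / D ^ 2) :
    ∃ Ω₀ > (0 : ℝ), ∀ Ω : ℝ, |Ω| < Ω₀ → -M / (M ^ 2 * Ω ^ 2 + D ^ 2) + c < 0 := by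
  have hcont : Continuous fun Ω : ℝ => -M / (M ^ 2 * Ω ^ 2 + D ^ 2) + c :=
    (continuous_const.div (by fun_prop) fun Ω => by positivity).add continuous_const
  have hzero : -M / (M ^ 2 * 0 ^ 2 + D ^ 2) + c < 0 := by
    rw [zero_pow two_ne_zero, mul_zero, zero_add, neg_div]
    linarith
  simpa only [Real.dist_eq, sub_zero] using
    Metric.eventually_nhds_iff.mp (hcont.continuousAt.eventually_lt continuousAt_const hzero)

theorem stmt_5_general (M D c : ℝ) (hD : 0 < D) (hc : c < M / D ^ 2) :
    ∃ Ω₀ > (0 : ℝ), ∀ Ω : ℝ, 0 < Ω → Ω < Ω₀ → ∀ β : ℂ, ∀ γ : ℝ,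
      ¬ (!![(2 * ((1 / (-(M : ℂ) * Ω ^ 2 + Complex.I * D * Ω)).re + c) : ℂ), β;
            (starRingEnd ℂ) β, (γ : ℂ)] : Matrix (Fin 2) (Fin 2) ℂ).PosSemidef := by
  obtain ⟨Ω₀, hΩ₀, hneg⟩ := exists_pos_forall_neg_div_add_neg hD.ne' hc
  refine ⟨Ω₀, hΩ₀, fun Ω hΩ hΩlt β γ hPSD => ?_⟩
  have hentry : (0 : ℝ) ≤ 2 * ((1 / (-(M : ℂ) * Ω ^ 2 + Complex.I * D * Ω)).re + c) := by
    have h00 := hPSD.diag_nonneg (i := 0)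
    simp only [of_apply, cons_val', cons_val_zero, empty_val', cons_val_fin_one] at h00
    exact_mod_cast h00
  rw [Complex.re_one_div_neg_mul_sq_add_I_mul M D hΩ.ne'] at hentry
  linarith [hneg Ω (by rwa [abs_of_pos hΩ])]

theorem stmt_5 (M D c : ℝ) (hM : 0 < M) (hD : 0 < D) (hc : c < M / D ^ 2) :
    ∃ Ω₀ > (0 : ℝ), ∀ Ω : ℝ, 0 < Ω → Ω < Ω₀ → ∀ β : ℂ, ∀ γ : ℝ,
      ¬ (!![(2 * ((1 / (-(M : ℂ) * Ω ^ 2 + Complex.I * D * Ω)).re + c) : ℂ), β;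
            (starRingEnd ℂ) β, (γ : ℂ)] : Matrix (Fin 2) (Fin 2) ℂ).PosSemidef :=
  stmt_5_general M D c hD hc
end

section
/- Let v_D, v_Q, i_D, i_Q and d be real numbers. Define the 2×2 real matrices 𝓔 = [[v_D, v_Q], [−v_Q, v_D]], 𝓒 = [[i_D, i_Q], [i_Q, −i_D]], 𝓕 = [[v_Q, v_D], [−v_D, v_Q]] (row-major), and D_j := (d·𝓔 + 𝓒)·𝓕. Then D_j + D_jᵀ = 2·[[i_D·v_Q − i_Q·v_D, i_D·v_D + i_Q·v_Q], [i_D·v_D + i_Q·v_Q, −(i_D·v_Q − i_Q·v_D)]]; in particular trace(D_j + D_jᵀ) = 0, and if (i_D·v_D + i_Q·v_Q, i_D·v_Q − i_Q·v_D) ≠ (0, 0) then D_j + D_jᵀ is not positive semidefinite. -/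
open Matrix

/-! The product `𝓔 𝓕` is `(v_D² + v_Q²)` times the rotation by a right angle, hence skew-symmetric,
while `𝓒 𝓕` is already symmetric and traceless. So `D_j + D_jᵀ = 2 𝓒 𝓕` does not depend on `d`,
and a traceless positive semidefinite matrix vanishes. -/

lemma add_transpose_of_skew_add_symm {n R : Type*} [CommRing R] {X Y : Matrix n n R}
    (hX : Xᵀ = -X) (hY : Yᵀ = Y) : X + Y + (X + Y)ᵀ = (2 : R) • Y := by
  rw [transpose_add, hX, hY, two_smul]
  abel

lemma rotation_mul_eq_smul_quarterTurn {R : Type*} [CommRing R] (vD vQ : R) :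
    !![vD, vQ; -vQ, vD] * !![vQ, vD; -vD, vQ] = (vD ^ 2 + vQ ^ 2) • !![0, 1; -1, 0] := by
  ext i j
  fin_cases i <;> fin_cases j <;> simp <;> ring

lemma transpose_quarterTurn {R : Type*} [CommRing R] :
    (!![0, 1; -1, 0] : Matrix (Fin 2) (Fin 2) R)ᵀ = -!![0, 1; -1, 0] := by
  ext i j
  fin_cases i <;> fin_cases j <;> simp

lemma reflection_mul_eq {R : Type*} [CommRing R] (iD iQ vD vQ : R) :
    !![iD, iQ; iQ, -iD] * !![vQ, vD; -vD, vQ] =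
      !![iD * vQ - iQ * vD, iD * vD + iQ * vQ; iD * vD + iQ * vQ, -(iD * vQ - iQ * vD)] := by
  ext i j
  fin_cases i <;> fin_cases j <;> simp <;> ring

lemma trace_fin_two_neg_diag {R : Type*} [CommRing R] (a b c : R) :
    trace !![a, b; c, -a] = 0 := by
  simp [trace_fin_two]

theorem stmt_7 (vD vQ iD iQ d : ℝ) :
    ((d • !![vD, vQ; -vQ, vD] + !![iD, iQ; iQ, -iD]) * !![vQ, vD; -vD, vQ] +
      ((d • !![vD, vQ; -vQ, vD] + !![iD, iQ; iQ, -iD]) * !![vQ, vD; -vD, vQ])ᵀ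
        = (2 : ℝ) • !![iD * vQ - iQ * vD, iD * vD + iQ * vQ;
                       iD * vD + iQ * vQ, -(iD * vQ - iQ * vD)]) ∧
    (((d • !![vD, vQ; -vQ, vD] + !![iD, iQ; iQ, -iD]) * !![vQ, vD; -vD, vQ] +
      ((d • !![vD, vQ; -vQ, vD] + !![iD, iQ; iQ, -iD]) * !![vQ, vD; -vD, vQ])ᵀ).trace = 0) ∧
    ((iD * vD + iQ * vQ, iD * vQ - iQ * vD) ≠ (0, 0) →
      ¬ ((d • !![vD, vQ; -vQ, vD] + !![iD, iQ; iQ, -iD]) * !![vQ, vD; -vD, vQ] +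
        ((d • !![vD, vQ; -vQ, vD] + !![iD, iQ; iQ, -iD]) * !![vQ, vD; -vD, vQ])ᵀ).PosSemidef) := by
  have hsum : (d • !![vD, vQ; -vQ, vD] + !![iD, iQ; iQ, -iD]) * !![vQ, vD; -vD, vQ] +
      ((d • !![vD, vQ; -vQ, vD] + !![iD, iQ; iQ, -iD]) * !![vQ, vD; -vD, vQ])ᵀ
        = (2 : ℝ) • !![iD * vQ - iQ * vD, iD * vD + iQ * vQ;
                       iD * vD + iQ * vQ, -(iD * vQ - iQ * vD)] := by
    rw [add_mul, smul_mul_assoc, rotation_mul_eq_smul_quarterTurn, reflection_mul_eq]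
    refine add_transpose_of_skew_add_symm ?_ ?_
    · rw [transpose_smul, transpose_smul, transpose_quarterTurn, smul_neg, smul_neg]
    · ext i j
      fin_cases i <;> fin_cases j <;> rfl
  have htrace : trace ((2 : ℝ) • !![iD * vQ - iQ * vD, iD * vD + iQ * vQ;
      iD * vD + iQ * vQ, -(iD * vQ - iQ * vD)]) = 0 := by
    rw [trace_smul, trace_fin_two_neg_diag, smul_zero]
  refine ⟨hsum, hsum ▸ htrace, fun hne hpsd => hne ?_⟩
  rw [hsum] at hpsd
  have hzero := (smul_eq_zero.mp (hpsd.trace_eq_zero_iff.mp htrace)).resolve_left two_ne_zero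
  exact Prod.ext (by simpa using congr_fun (congr_fun hzero 0) 1)
    (by simpa using congr_fun (congr_fun hzero 0) 0)
end

section
/- Let v_D, v_Q, i_D, i_Q, d and τ be real numbers with τ > 0. Define the 2×2 real matrices 𝓔 = [[v_D, v_Q], [−v_Q, v_D]], 𝓒 = [[i_D, i_Q], [i_Q, −i_D]], 𝓕 = [[v_Q, v_D], [−v_D, v_Q]] (row-major), and D_jd := τ·(d·𝓔 + 𝓒)·𝓕. Then trace(D_jd + D_jdᵀ) = 0, and if (i_D·v_D + i_Q·v_Q, i_D·v_Q − i_Q·v_D) ≠ (0, 0) then D_jd + D_jdᵀ is not positive semidefinite. -/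
/-!
With `𝓔 = [[vD, vQ], [-vQ, vD]]` a scaled rotation, `𝓒` a scaled reflection and
`𝓕 = [[vQ, vD], [-vD, vQ]]`, the product `𝓔 𝓕 = (vD² + vQ²) J` is skew-symmetric and `𝓒 𝓕` is
symmetric and traceless. Hence `D_jd + D_jdᵀ = 2τ 𝓒 𝓕` has trace zero, and a positive semidefinite
matrix of trace zero vanishes, which forces `𝓒 𝓕 = 0`.
-/

open Matrix

section
variable {R : Type*} [CommRing R]

theorem rotation_mul_swapped_rotation (vD vQ : R) :
    !![vD, vQ; -vQ, vD] * !![vQ, vD; -vD, vQ] =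
      !![0, vD ^ 2 + vQ ^ 2; -(vD ^ 2 + vQ ^ 2), 0] := by
  ext i j; fin_cases i <;> fin_cases j <;> simp [mul_apply, Fin.sum_univ_two] <;> ring

theorem reflection_mul_swapped_rotation (vD vQ iD iQ : R) :
    !![iD, iQ; iQ, -iD] * !![vQ, vD; -vD, vQ] =
      !![iD * vQ - iQ * vD, iD * vD + iQ * vQ; iD * vD + iQ * vQ, -(iD * vQ - iQ * vD)] := by
  ext i j; fin_cases i <;> fin_cases j <;> simp [mul_apply, Fin.sum_univ_two] <;> ring

theorem smul_add_transpose_of_skew_of_symm {n : Type*} (τ d : R) {S P : Matrix n n R}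
    (hS : Sᵀ = -S) (hP : Pᵀ = P) :
    τ • (d • S + P) + (τ • (d • S + P))ᵀ = (2 * τ) • P := by
  rw [transpose_smul, transpose_add, transpose_smul, hS, hP]
  module

end

theorem stmt_8 (vD vQ iD iQ d τ : ℝ) (hτ : 0 < τ) :
    ((τ • ((d • !![vD, vQ; -vQ, vD] + !![iD, iQ; iQ, -iD]) * !![vQ, vD; -vD, vQ]) +
      (τ • ((d • !![vD, vQ; -vQ, vD] + !![iD, iQ; iQ, -iD]) * !![vQ, vD; -vD, vQ]))ᵀ).trace
        = 0) ∧
    ((iD * vD + iQ * vQ, iD * vQ - iQ * vD) ≠ (0, 0) →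
      ¬ (τ • ((d • !![vD, vQ; -vQ, vD] + !![iD, iQ; iQ, -iD]) * !![vQ, vD; -vD, vQ]) +
        (τ • ((d • !![vD, vQ; -vQ, vD] + !![iD, iQ; iQ, -iD]) * !![vQ, vD; -vD, vQ]))ᵀ).PosSemidef) := by
  set a := iD * vQ - iQ * vD
  set b := iD * vD + iQ * vQ
  have hsymm : τ • ((d • !![vD, vQ; -vQ, vD] + !![iD, iQ; iQ, -iD]) * !![vQ, vD; -vD, vQ]) +
      (τ • ((d • !![vD, vQ; -vQ, vD] + !![iD, iQ; iQ, -iD]) * !![vQ, vD; -vD, vQ]))ᵀ =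
        (2 * τ) • !![a, b; b, -a] := by
    rw [add_mul, smul_mul_assoc, rotation_mul_swapped_rotation, reflection_mul_swapped_rotation]
    refine smul_add_transpose_of_skew_of_symm τ d ?_ ?_ <;>
      ext i j <;> fin_cases i <;> fin_cases j <;> simp
  have htrace : ((2 * τ) • !![a, b; b, -a]).trace = 0 := by simp [trace_fin_two]
  rw [hsymm]
  refine ⟨htrace, fun hne hpsd => hne ?_⟩
  have hzero : !![a, b; b, -a] = 0 :=
    (smul_eq_zero.mp (hpsd.trace_eq_zero_iff.mp htrace)).resolve_left (by positivity)
  exact Prod.ext (congrFun₂ hzero 0 1) (congrFun₂ hzero 0 0)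
end

section
/- Let M > 0, D > 0 and a, b, c be real numbers. For every real Ω, define the 2×2 complex matrix J(Ω) = [[1/(M·iΩ + D) + iΩ·a, iΩ·b], [iΩ·b, iΩ·c]]. Then J(Ω) + J(Ω)^H = [[2D/(M²Ω² + D²), 0], [0, 0]], and this matrix is positive semidefinite for every real Ω. -/
/-! The matrix splits as `(M s + D)⁻¹ E₁₁ + s S` with `S` real symmetric. On the imaginary axis
`s S` is skew-Hermitian and drops out of `J + Jᴴ`, while `z⁻¹ + conj z⁻¹ = 2 re z / |z|²` turns
the first term into `2D / (M²Ω² + D²) E₁₁`, which is positive semidefinite because `D > 0`. -/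

open Matrix ComplexOrder ComplexConjugate

namespace Matrix

theorem fin_two_symm_add_conjTranspose {R : Type*} [Add R] [Star R] (p q r : R) :
    !![p, q; q, r] + !![p, q; q, r]ᴴ = !![p + star p, q + star q; q + star q, r + star r] := by
  ext i j
  fin_cases i <;> fin_cases j <;> rfl

theorem posSemidef_fin_two_of_nonneg {R : Type*} [Ring R] [PartialOrder R] [StarRing R]
    [StarOrderedRing R] {r : R} (hr : 0 ≤ r) : (!![r, 0; 0, 0]).PosSemidef := by
  have hdiag : !![r, 0; 0, 0] = diagonal ![r, 0] := by
    ext i j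
    fin_cases i <;> fin_cases j <;> rfl
  rw [hdiag, posSemidef_diagonal_iff]
  intro i
  fin_cases i
  exacts [hr, le_rfl]

end Matrix

namespace Complex

theorem inv_add_conj_inv (z : ℂ) : z⁻¹ + conj z⁻¹ = (2 * (z.re / normSq z) : ℝ) := by
  rw [add_conj, inv_re]

theorem normSq_mul_I_add (M Ω D : ℝ) :
    normSq ((M : ℂ) * (I * Ω) + D) = M ^ 2 * Ω ^ 2 + D ^ 2 := by
  rw [normSq_apply]
  simp
  ring

end Complex

theorem stmt_9_general (M D a b c : ℝ) (hD : 0 < D) :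
    ∀ Ω : ℝ,
      (!![1 / ((M : ℂ) * (Complex.I * Ω) + D) + Complex.I * Ω * a, Complex.I * Ω * b;
           Complex.I * Ω * b, Complex.I * Ω * c] +
        (!![1 / ((M : ℂ) * (Complex.I * Ω) + D) + Complex.I * Ω * a, Complex.I * Ω * b;
           Complex.I * Ω * b, Complex.I * Ω * c])ᴴ
          = !![(2 * D / (M ^ 2 * Ω ^ 2 + D ^ 2) : ℂ), 0; 0, 0]) ∧
      (!![(2 * D / (M ^ 2 * Ω ^ 2 + D ^ 2) : ℂ), 0; 0, 0] :
          Matrix (Fin 2) (Fin 2) ℂ).PosSemidef := by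
  intro Ω
  set r : ℝ := 2 * D / (M ^ 2 * Ω ^ 2 + D ^ 2) with hr
  have hr_coe : (2 * D / (M ^ 2 * Ω ^ 2 + D ^ 2) : ℂ) = r := by
    push_cast [hr]
    rfl
  have hinv : 1 / ((M : ℂ) * (Complex.I * Ω) + D)
      + star (1 / ((M : ℂ) * (Complex.I * Ω) + D)) = r := by
    rw [one_div, Complex.star_def, Complex.inv_add_conj_inv, Complex.normSq_mul_I_add]
    simp [hr, mul_div_assoc]
  have hskew (x : ℝ) : Complex.I * Ω * x + star (Complex.I * Ω * x) = 0 := by simp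
  rw [hr_coe]
  refine ⟨?_, posSemidef_fin_two_of_nonneg (Complex.zero_le_real.mpr (by positivity))⟩
  rw [fin_two_symm_add_conjTranspose, star_add, add_add_add_comm, hinv, hskew, hskew, hskew,
    add_zero]

theorem stmt_9 (M D a b c : ℝ) (hM : 0 < M) (hD : 0 < D) :
    ∀ Ω : ℝ,
      (!![1 / ((M : ℂ) * (Complex.I * Ω) + D) + Complex.I * Ω * a, Complex.I * Ω * b;
           Complex.I * Ω * b, Complex.I * Ω * c] +
        (!![1 / ((M : ℂ) * (Complex.I * Ω) + D) + Complex.I * Ω * a, Complex.I * Ω * b;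
           Complex.I * Ω * b, Complex.I * Ω * c])ᴴ
          = !![(2 * D / (M ^ 2 * Ω ^ 2 + D ^ 2) : ℂ), 0; 0, 0]) ∧
      (!![(2 * D / (M ^ 2 * Ω ^ 2 + D ^ 2) : ℂ), 0; 0, 0] :
          Matrix (Fin 2) (Fin 2) ℂ).PosSemidef :=
  stmt_9_general M D a b c hD
end

section
/- Let k_pf > 0, k_qv > 0 and τ ≥ 0 be real numbers. For every real Ω, define the 2×2 complex matrix N(Ω) = [[1/k_pf, 0], [0, (iΩ)/(k_qv·(1 + iΩτ))]]. Then N(Ω) + N(Ω)^H = [[2/k_pf, 0], [0, 2Ω²τ/(k_qv·(1 + Ω²τ²))]], and this matrix is positive semidefinite for every real Ω. -/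
/-!
Both matrices are diagonal, so `N + Nᴴ` is the diagonal of `2 Re`, and it is positive semidefinite
as soon as these real parts are nonnegative. The first entry is `2 / k_pf`; for the second,
multiplying by the conjugate denominator gives
`Re (iΩ / (1 + iΩτ)) = Ω²τ / (1 + Ω²τ²) ≥ 0` for `τ ≥ 0`.
-/

open Matrix ComplexOrder

namespace Matrix

variable {R : Type*}

theorem diagonal_fin_two_add_conjTranspose [AddCommMonoid R] [StarAddMonoid R] (a b : R) :
    !![a, 0; 0, b] + (!![a, 0; 0, b])ᴴ = !![a + star a, 0; 0, b + star b] := by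
  ext i j
  fin_cases i <;> fin_cases j <;> simp

theorem posSemidef_fin_two_diagonal [CommRing R] [PartialOrder R] [StarRing R]
    [StarOrderedRing R] {a b : R} (ha : 0 ≤ a) (hb : 0 ≤ b) :
    (!![a, 0; 0, b] : Matrix (Fin 2) (Fin 2) R).PosSemidef := by
  have hd : (0 : Fin 2 → R) ≤ ![a, b] := fun i ↦ by fin_cases i <;> assumption
  simpa [diagonal_fin_two] using PosSemidef.diagonal hd

end Matrix

namespace Complex

theorem add_star_eq_ofReal_two_mul_re (z : ℂ) : z + star z = (2 * z.re : ℝ) := add_conj z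

theorem re_I_mul_div_one_add_I_mul (Ω τ : ℝ) :
    (I * Ω / (1 + I * Ω * τ)).re = Ω ^ 2 * τ / (1 + Ω ^ 2 * τ ^ 2) := by
  rw [div_re]
  simp only [mul_re, mul_im, add_re, add_im, I_re, I_im, ofReal_re, ofReal_im, one_re, one_im,
    normSq_apply]
  ring

theorem re_I_mul_div_mul_one_add_I_mul (k Ω τ : ℝ) :
    (I * Ω / (k * (1 + I * Ω * τ))).re = Ω ^ 2 * τ / (k * (1 + Ω ^ 2 * τ ^ 2)) := by
  rw [mul_comm (k : ℂ), ← div_div, div_ofReal_re, re_I_mul_div_one_add_I_mul, div_div, mul_comm k]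

end Complex

theorem stmt_10 (kpf kqv τ : ℝ) (hkpf : 0 < kpf) (hkqv : 0 < kqv) (hτ : 0 ≤ τ) :
    ∀ Ω : ℝ,
      (!![1 / (kpf : ℂ), 0; 0, (Complex.I * Ω) / (kqv * (1 + Complex.I * Ω * τ))] +
        (!![1 / (kpf : ℂ), 0; 0, (Complex.I * Ω) / (kqv * (1 + Complex.I * Ω * τ))])ᴴ
          = !![(2 / kpf : ℂ), 0; 0, (2 * Ω ^ 2 * τ / (kqv * (1 + Ω ^ 2 * τ ^ 2)) : ℂ)]) ∧
      (!![(2 / kpf : ℂ), 0; 0, (2 * Ω ^ 2 * τ / (kqv * (1 + Ω ^ 2 * τ ^ 2)) : ℂ)] :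
          Matrix (Fin 2) (Fin 2) ℂ).PosSemidef := by
  intro Ω
  refine ⟨?_, posSemidef_fin_two_diagonal ?_ ?_⟩
  · rw [diagonal_fin_two_add_conjTranspose]
    simp only [Complex.add_star_eq_ofReal_two_mul_re, Complex.re_I_mul_div_mul_one_add_I_mul,
      one_div, Complex.inv_re, Complex.normSq_ofReal, Complex.ofReal_re]
    congr 3 <;> push_cast <;> field_simp
  · exact_mod_cast (by positivity : (0 : ℝ) ≤ 2 / kpf)
  · exact_mod_cast (by positivity : (0 : ℝ) ≤ 2 * Ω ^ 2 * τ / (kqv * (1 + Ω ^ 2 * τ ^ 2)))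
end
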